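/- Let A₀ be the 6×6 matrix with entries a₁₅ = 1, a₂₄ = -1 and all other entries 0. Then the fibre ν⁻¹(A₀) = {M ∈ Mat₂ₓ₆(ℂ) : M Q Mᵗ = 0 and Mᵗ J M Q = A₀} consists exactly of the matrices M whose columns 3, 4, 5, 6 are zero and whose first two columns form a matrix in SL₂(ℂ). In particular ν⁻¹(A₀) is in bijection with SL₂(ℂ). -/
import Mathlib


open Matrix

noncomputable def J2 : Matrix (Fin 2) (Fin 2) ℂ := !![0, 1; -1, 0]

noncomputable def Q6 : Matrix (Fin 6) (Fin 6) ℂ :=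
  Matrix.of fun i j => if (i : ℕ) + 3 = (j : ℕ) ∨ (j : ℕ) + 3 = (i : ℕ) then 1 else 0

/-- The matrix A₀ with a₁₅ = 1, a₂₄ = -1 (1-indexed) and all other entries zero. -/
noncomputable def A0 : Matrix (Fin 6) (Fin 6) ℂ :=
  Matrix.of fun i j =>
    if i = 0 ∧ j = 4 then 1 else if i = 1 ∧ j = 3 then -1 else 0

theorem stmt_8 (M : Matrix (Fin 2) (Fin 6) ℂ) :
    (M * Q6 * Mᵀ = 0 ∧ Mᵀ * J2 * M * Q6 = A0) ↔
      ((∀ i : Fin 2, ∀ j : Fin 6, 2 ≤ (j : ℕ) → M i j = 0) ∧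
        M 0 0 * M 1 1 - M 0 1 * M 1 0 = 1) := by
  constructor
  · rintro ⟨-, h2⟩
    have e04 := congrFun (congrFun h2 0) 4
    have e00 := congrFun (congrFun h2 0) 0
    have e10 := congrFun (congrFun h2 1) 0
    have e01 := congrFun (congrFun h2 0) 1
    have e11 := congrFun (congrFun h2 1) 1
    have e02 := congrFun (congrFun h2 0) 2
    have e12 := congrFun (congrFun h2 1) 2
    have e05 := congrFun (congrFun h2 0) 5
    have e15 := congrFun (congrFun h2 1) 5
    simp (config := {decide := true})
      [Matrix.mul_apply, Fin.sum_univ_six, Fin.sum_univ_two, J2, Q6, A0]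
      at e04 e00 e10 e01 e11 e02 e12 e05 e15
    refine ⟨fun i j hj => ?_, by linear_combination e04⟩
    fin_cases i <;> fin_cases j <;> simp at hj ⊢
    · linear_combination M 0 1 * e05 - M 0 0 * e15 - M 0 2 * e04
    · linear_combination M 0 1 * e00 - M 0 0 * e10 - M 0 3 * e04
    · linear_combination M 0 1 * e01 - M 0 0 * e11 - M 0 4 * e04
    · linear_combination M 0 1 * e02 - M 0 0 * e12 - M 0 5 * e04
    · linear_combination M 1 1 * e05 - M 1 0 * e15 - M 1 2 * e04
    · linear_combination M 1 1 * e00 - M 1 0 * e10 - M 1 3 * e04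
    · linear_combination M 1 1 * e01 - M 1 0 * e11 - M 1 4 * e04
    · linear_combination M 1 1 * e02 - M 1 0 * e12 - M 1 5 * e04
  · rintro ⟨hz, hdet⟩
    have z02 : M 0 2 = 0 := hz 0 2 (by decide)
    have z03 : M 0 3 = 0 := hz 0 3 (by decide)
    have z04 : M 0 4 = 0 := hz 0 4 (by decide)
    have z05 : M 0 5 = 0 := hz 0 5 (by decide)
    have z12 : M 1 2 = 0 := hz 1 2 (by decide)
    have z13 : M 1 3 = 0 := hz 1 3 (by decide)
    have z14 : M 1 4 = 0 := hz 1 4 (by decide)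
    have z15 : M 1 5 = 0 := hz 1 5 (by decide)
    constructor <;>
      · ext i j
        fin_cases i <;> fin_cases j <;>
          simp (config := {decide := true})
            [Matrix.mul_apply, Fin.sum_univ_six, Fin.sum_univ_two, J2, Q6, A0,
              z02, z03, z04, z05, z12, z13, z14, z15] <;>
          first
            | linear_combination hdet
            | linear_combination -hdet
            | ring
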